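/- Let r > 0, λ > 0, γ > 0, α ∈ ℝ, and let (a_ε)_{ε>0} be a family of continuous functions on ℝ with sup_{ε>0} ∫_ℝ |a_ε(x)| dx < ∞ and lim_{ε→0} ∫_x^y a_ε(z) dz = α·[x < 0 < y] for all x < y with x, y ≠ 0. Define T_ε on C[−r,r] by (T_ε f)(x) = 1 + 2λ ∫_{−r}^x ∫_{−r}^y V_ε(y,z) f(z) dz dy with V_ε(y,z) := exp(−2∫_z^y a_ε(u) du)·(γ·[yz < 0] + [yz ≥ 0]), and define T by (T f)(x) = 1 + 2λ ∫_{−r}^x ∫_{−r}^y V(y,z) f(z) dz dy with V(y,z) := e^{−2α} γ·[yz < 0] + [yz ≥ 0]. Then for every f ∈ C[−r,r], T_ε f converges to T f uniformly on [−r,r] as ε → 0+. -/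

import Mathlib

open MeasureTheory Set Filter Topology Real

/-- The kernel `V_ε(y,z) = exp(−2∫_z^y a)·(γ·[yz<0] + [yz≥0])`. -/
noncomputable def Vker (γ : ℝ) (a : ℝ → ℝ) (y z : ℝ) : ℝ :=
  Real.exp (-2 * ∫ u in z..y, a u) *
    (γ * (if y * z < 0 then 1 else 0) + (if 0 ≤ y * z then 1 else 0))

/-- The map `(T_ε f)(x) = 1 + 2λ ∫_{−r}^x ∫_{−r}^y V_ε(y,z) f(z) dz dy`. -/
noncomputable def Tmap (r lam γ : ℝ) (a : ℝ → ℝ) (f : ℝ → ℝ) (x : ℝ) : ℝ :=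
  1 + 2 * lam * ∫ y in (-r)..x, ∫ z in (-r)..y, Vker γ a y z * f z

/-- The limit kernel `V(y,z) = e^{−2α}γ·[yz<0] + [yz≥0]`. -/
noncomputable def Vlim (γ α : ℝ) (y z : ℝ) : ℝ :=
  Real.exp (-2 * α) * γ * (if y * z < 0 then 1 else 0) + (if 0 ≤ y * z then 1 else 0)

/-!
Since `|∫_z^y a_ε| ≤ ‖a_ε‖₁ ≤ M`, the kernels `V_ε` are bounded uniformly in `ε`. For `z < y`
with `y, z ≠ 0`, the interval `(z, y)` contains `0` exactly when `yz < 0`, so the hypothesis on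
`∫_z^y a_ε` gives `V_ε(y, z) → V(y, z)`. Bounded convergence, applied first in `z`
and then in `y`, gives `∫∫_{-r < z ≤ y ≤ r} |V_ε - V| |f| → 0`, and this double integral bounds
`|T_ε f - T f|` on all of `[-r, r]`.
-/

open Function

section IteratedIntegral

variable {a b C D : ℝ} {G H : ℝ → ℝ → ℝ}

lemma stronglyMeasurable_setIntegral_Ioc (hG : Measurable (uncurry G)) :
    StronglyMeasurable fun y => ∫ z in Ioc a y, G y z := by
  have hs : MeasurableSet {p : ℝ × ℝ | p.2 ∈ Ioc a p.1} :=
    (measurableSet_lt measurable_const measurable_snd).inter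
      (measurableSet_le measurable_snd measurable_fst)
  simpa only [integral_indicator measurableSet_Ioc] using
    StronglyMeasurable.integral_prod_right (ν := volume)
      (f := fun y z => (Ioc a y).indicator (G y) z) (hG.indicator hs).stronglyMeasurable

lemma norm_setIntegral_Ioc_le {g : ℝ → ℝ} (hg : ∀ z, ‖g z‖ ≤ C) {y : ℝ} (hy : y ∈ Icc a b) :
    ‖∫ z in Ioc a y, g z‖ ≤ C * (b - a) := by
  have hC : 0 ≤ C := (norm_nonneg _).trans (hg a)
  refine (norm_setIntegral_le_of_norm_le_const measure_Ioc_lt_top fun z _ => hg z).trans ?_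
  rw [Real.volume_real_Ioc_of_le hy.1]
  exact mul_le_mul_of_nonneg_left (by linarith [hy.2]) hC

lemma integrableOn_of_measurable_uncurry (hG : Measurable (uncurry G))
    (hGC : ∀ y z, ‖G y z‖ ≤ C) (y : ℝ) {s : Set ℝ} (hs : volume s ≠ ⊤) :
    IntegrableOn (G y) s :=
  Measure.integrableOn_of_bounded hs (hG.comp measurable_prodMk_left).aestronglyMeasurable
    (ae_of_all _ (hGC y))

lemma integrableOn_setIntegral_Ioc (hG : Measurable (uncurry G)) (hGC : ∀ y z, ‖G y z‖ ≤ C) :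
    IntegrableOn (fun y => ∫ z in Ioc a y, G y z) (Ioc a b) :=
  Measure.integrableOn_of_bounded measure_Ioc_lt_top.ne
    (stronglyMeasurable_setIntegral_Ioc hG).aestronglyMeasurable
    ((ae_restrict_iff' measurableSet_Ioc).2 <| ae_of_all _ fun _ hy =>
      norm_setIntegral_Ioc_le (hGC _) (Ioc_subset_Icc_self hy))

lemma iteratedIntegral_eq_setIntegral {x : ℝ} (hx : a ≤ x) :
    ∫ y in a..x, ∫ z in a..y, G y z = ∫ y in Ioc a x, ∫ z in Ioc a y, G y z := by
  rw [intervalIntegral.integral_of_le hx]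
  exact setIntegral_congr_fun measurableSet_Ioc fun y hy =>
    intervalIntegral.integral_of_le hy.1.le

lemma iteratedIntegral_mul_congr {K : ℝ → ℝ → ℝ} {g h : ℝ → ℝ} (hgh : EqOn g h (Icc a b))
    {x : ℝ} (hx : x ∈ Icc a b) :
    ∫ y in a..x, ∫ z in a..y, K y z * g z = ∫ y in a..x, ∫ z in a..y, K y z * h z := by
  have hsub : uIcc a x ⊆ Icc a b := uIcc_subset_Icc (left_mem_Icc.2 (hx.1.trans hx.2)) hx
  refine intervalIntegral.integral_congr fun y hy => intervalIntegral.integral_congr fun z hz => ?_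
  rw [hgh (hsub (uIcc_subset_uIcc_left hy hz))]

lemma norm_iteratedIntegral_sub_le (hG : Measurable (uncurry G)) (hH : Measurable (uncurry H))
    (hGC : ∀ y z, ‖G y z‖ ≤ C) (hHD : ∀ y z, ‖H y z‖ ≤ D) {x : ℝ} (hx : x ∈ Icc a b) :
    ‖(∫ y in a..x, ∫ z in a..y, G y z) - ∫ y in a..x, ∫ z in a..y, H y z‖ ≤
      ∫ y in Ioc a b, ∫ z in Ioc a y, ‖G y z - H y z‖ := by
  have hsub : Ioc a x ⊆ Ioc a b := Ioc_subset_Ioc_right hx.2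
  have hGHC : ∀ y z, ‖‖G y z - H y z‖‖ ≤ C + D := fun y z => by
    rw [norm_norm]
    exact (norm_sub_le _ _).trans (add_le_add (hGC y z) (hHD y z))
  have hGi := (integrableOn_setIntegral_Ioc (a := a) hG hGC).mono_set hsub
  have hHi := (integrableOn_setIntegral_Ioc (a := a) hH hHD).mono_set hsub
  have hGHi := integrableOn_setIntegral_Ioc (a := a) (b := b)
    (G := fun y z => ‖G y z - H y z‖) (hG.sub hH).norm hGHC
  rw [iteratedIntegral_eq_setIntegral hx.1, iteratedIntegral_eq_setIntegral hx.1,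
    ← integral_sub hGi hHi]
  calc ‖∫ y in Ioc a x, ((∫ z in Ioc a y, G y z) - ∫ z in Ioc a y, H y z)‖
      ≤ ∫ y in Ioc a x, ‖(∫ z in Ioc a y, G y z) - ∫ z in Ioc a y, H y z‖ :=
        norm_integral_le_integral_norm _
    _ ≤ ∫ y in Ioc a x, ∫ z in Ioc a y, ‖G y z - H y z‖ := by
        refine integral_mono (hGi.sub hHi).norm (hGHi.mono_set hsub) fun y => ?_
        rw [← integral_sub (integrableOn_of_measurable_uncurry hG hGC y measure_Ioc_lt_top.ne)
          (integrableOn_of_measurable_uncurry hH hHD y measure_Ioc_lt_top.ne)]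
        exact norm_integral_le_integral_norm _
    _ ≤ ∫ y in Ioc a b, ∫ z in Ioc a y, ‖G y z - H y z‖ :=
        setIntegral_mono_set hGHi
          (ae_of_all _ fun _ => integral_nonneg fun _ => norm_nonneg _) hsub.eventuallyLE

variable {ι : Type*} {l : Filter ι} [l.IsCountablyGenerated] {F : ι → ℝ → ℝ → ℝ}

lemma tendsto_iteratedIntegral_norm_sub (hF : ∀ᶠ i in l, Measurable (uncurry (F i)))
    (hH : Measurable (uncurry H)) (hFC : ∀ᶠ i in l, ∀ y z, ‖F i y z‖ ≤ C)
    (hHD : ∀ y z, ‖H y z‖ ≤ D)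
    (hlim : ∀ᵐ y, ∀ᵐ z, z < y → Tendsto (fun i => F i y z) l (𝓝 (H y z))) :
    Tendsto (fun i => ∫ y in Ioc a b, ∫ z in Ioc a y, ‖F i y z - H y z‖) l (𝓝 0) := by
  have hFHC : ∀ᶠ i in l, ∀ y z, ‖‖F i y z - H y z‖‖ ≤ C + D := hFC.mono fun i hi y z => by
    rw [norm_norm]
    exact (norm_sub_le _ _).trans (add_le_add (hi y z) (hHD y z))
  have hinner : ∀ᵐ y, Tendsto (fun i => ∫ z in Ioc a y, ‖F i y z - H y z‖) l (𝓝 0) := by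
    filter_upwards [hlim] with y hy
    simpa using tendsto_integral_filter_of_norm_le_const (f := fun _ => (0 : ℝ))
      (hF.mono fun i hi => ((hi.sub hH).norm.comp measurable_prodMk_left).aestronglyMeasurable)
      ⟨C + D, hFHC.mono fun i hi => ae_of_all _ (hi y)⟩ <| by
        filter_upwards [ae_restrict_of_ae (volume.ae_ne y), ae_restrict_of_ae hy,
          ae_restrict_mem measurableSet_Ioc] with z hzy hz hz_mem
        simpa using ((hz (lt_of_le_of_ne hz_mem.2 hzy)).sub_const (H y z)).norm
  simpa using tendsto_integral_filter_of_norm_le_const (f := fun _ => (0 : ℝ))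
    (hF.mono fun i hi =>
      (stronglyMeasurable_setIntegral_Ioc
        (G := fun y z => ‖F i y z - H y z‖) (hi.sub hH).norm).aestronglyMeasurable)
    ⟨(C + D) * (b - a), hFHC.mono fun i hi => (ae_restrict_iff' measurableSet_Ioc).2 <|
      ae_of_all _ fun y hy => norm_setIntegral_Ioc_le (hi y) (Ioc_subset_Icc_self hy)⟩
    (ae_restrict_of_ae hinner)

theorem tendstoUniformlyOn_iteratedIntegral (hF : ∀ᶠ i in l, Measurable (uncurry (F i)))
    (hH : Measurable (uncurry H)) (hFC : ∀ᶠ i in l, ∀ y z, ‖F i y z‖ ≤ C)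
    (hHD : ∀ y z, ‖H y z‖ ≤ D)
    (hlim : ∀ᵐ y, ∀ᵐ z, z < y → Tendsto (fun i => F i y z) l (𝓝 (H y z))) :
    TendstoUniformlyOn (fun i x => ∫ y in a..x, ∫ z in a..y, F i y z)
      (fun x => ∫ y in a..x, ∫ z in a..y, H y z) l (Icc a b) := by
  rw [Metric.tendstoUniformlyOn_iff]
  intro δ hδ
  filter_upwards [(tendsto_iteratedIntegral_norm_sub (a := a) (b := b) hF hH hFC hHD
    hlim).eventually (gt_mem_nhds hδ), hF, hFC] with i hi hFi hFCi x hx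
  rw [dist_comm, dist_eq_norm]
  exact (norm_iteratedIntegral_sub_le hFi hH hFCi hHD hx).trans_lt hi

end IteratedIntegral

lemma continuous_intervalIntegral_of_integrable {g : ℝ → ℝ} (hg : Integrable g) :
    Continuous fun p : ℝ × ℝ => ∫ u in p.2..p.1, g u := by
  have hprim := intervalIntegral.continuous_primitive (fun _ _ => hg.intervalIntegrable) 0
  refine ((hprim.comp continuous_fst).sub (hprim.comp continuous_snd)).congr fun p => ?_
  exact intervalIntegral.integral_interval_sub_left hg.intervalIntegrable hg.intervalIntegrable

lemma abs_intervalIntegral_le_integral_abs {g : ℝ → ℝ} (hg : Integrable g) (y z : ℝ) :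
    |∫ u in z..y, g u| ≤ ∫ u, |g u| := by
  rw [← Real.norm_eq_abs, intervalIntegral.norm_integral_eq_norm_integral_uIoc]
  exact (norm_integral_le_integral_norm _).trans
    (setIntegral_le_integral hg.norm (ae_of_all _ fun _ => norm_nonneg _))

-- `Vker γ g y z = exp (-2 * ∫ u in z..y, g u) * signWeight γ y z` and
-- `Vlim γ α = signWeight (exp (-2 * α) * γ)` hold by `rfl`.
noncomputable def signWeight (c y z : ℝ) : ℝ :=
  c * (if y * z < 0 then 1 else 0) + (if 0 ≤ y * z then 1 else 0)

lemma measurable_signWeight (c : ℝ) : Measurable (uncurry (signWeight c)) := by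
  have hprod : Measurable fun p : ℝ × ℝ => p.1 * p.2 := measurable_fst.mul measurable_snd
  exact (measurable_const.mul (Measurable.ite (measurableSet_lt hprod measurable_const)
    measurable_const measurable_const)).add
    (Measurable.ite (measurableSet_le measurable_const hprod) measurable_const measurable_const)

lemma abs_signWeight_le (c y z : ℝ) : |signWeight c y z| ≤ |c| + 1 := by
  unfold signWeight
  split_ifs <;> simp only [mul_one, mul_zero, add_zero, zero_add, abs_one, abs_zero] <;>
    linarith [abs_nonneg c]

lemma measurable_Vker (γ : ℝ) {g : ℝ → ℝ} (hg : Integrable g) :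
    Measurable (uncurry (Vker γ g)) :=
  (continuous_exp.comp (continuous_const.mul
    (continuous_intervalIntegral_of_integrable hg))).measurable.mul (measurable_signWeight γ)

lemma measurable_Vlim (γ α : ℝ) : Measurable (uncurry (Vlim γ α)) :=
  measurable_signWeight (exp (-2 * α) * γ)

lemma abs_Vker_le (γ : ℝ) {g : ℝ → ℝ} {M : ℝ} (hg : Integrable g) (hM : ∫ u, |g u| ≤ M)
    (y z : ℝ) : |Vker γ g y z| ≤ exp (2 * M) * (|γ| + 1) := by
  have hI := (abs_intervalIntegral_le_integral_abs hg y z).trans hM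
  rw [Vker, abs_mul, abs_exp]
  exact mul_le_mul (exp_le_exp.2 (by linarith [neg_abs_le (∫ u in z..y, g u)]))
    (abs_signWeight_le γ y z) (abs_nonneg _) (exp_pos _).le

lemma abs_Vlim_le (γ α y z : ℝ) : |Vlim γ α y z| ≤ |exp (-2 * α) * γ| + 1 :=
  abs_signWeight_le _ y z

lemma tendsto_Vker {ι : Type*} {l : Filter ι} {γ α y z : ℝ} {g : ι → ℝ → ℝ}
    (hzy : z < y) (hz : z ≠ 0) (hy : y ≠ 0)
    (hlim : Tendsto (fun i => ∫ u in z..y, g i u) l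
      (𝓝 (α * (if z < 0 ∧ 0 < y then 1 else 0)))) :
    Tendsto (fun i => Vker γ (g i) y z) l (𝓝 (Vlim γ α y z)) := by
  have hVlim : Vlim γ α y z =
      exp (-2 * (α * (if z < 0 ∧ 0 < y then 1 else 0))) * signWeight γ y z := by
    by_cases hsign : z < 0 ∧ 0 < y
    · have hyz : y * z < 0 := mul_neg_of_pos_of_neg hsign.2 hsign.1
      simp [Vlim, signWeight, hsign, hyz, hyz.not_ge]
    · have hyz : 0 < y * z := by
        rcases hz.lt_or_gt with hz' | hz'
        · exact mul_pos_of_neg_of_neg ((not_lt.1 fun hy' => hsign ⟨hz', hy'⟩).lt_of_ne hy) hz'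
        · exact mul_pos (hz'.trans hzy) hz'
      simp [Vlim, signWeight, hsign, hyz.le, hyz.not_gt]
  rw [hVlim]
  exact ((continuous_exp.tendsto _).comp (hlim.const_mul (-2))).mul_const _

lemma IsCompact.exists_measurable_bounded_eqOn {s : Set ℝ} (hs : IsCompact s) {f : ℝ → ℝ}
    (hf : ContinuousOn f s) : ∃ F : ℝ → ℝ, Measurable F ∧ (∃ C, ∀ z, ‖F z‖ ≤ C) ∧ EqOn F f s := by
  classical
  obtain ⟨C, hC⟩ := hs.exists_bound_of_continuousOn hf
  refine ⟨s.indicator f, ?_, ⟨max C 0, fun z => ?_⟩, fun z hz => indicator_of_mem hz f⟩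
  · rw [← piecewise_eq_indicator]
    exact hf.measurable_piecewise continuousOn_const hs.measurableSet
  · by_cases hz : z ∈ s
    · rw [indicator_of_mem hz]
      exact le_max_of_le_left (hC z hz)
    · rw [indicator_of_notMem hz, norm_zero]
      exact le_max_right _ _

theorem tendstoUniformlyOn_iteratedIntegral_Vker_mul {γ α M C p q : ℝ} {a : ℝ → ℝ → ℝ}
    (haint : ∀ ε > (0:ℝ), Integrable (a ε)) (hM : ∀ ε > (0:ℝ), ∫ x, |a ε x| ≤ M)
    (hlim : ∀ x y : ℝ, x < y → x ≠ 0 → y ≠ 0 →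
      Tendsto (fun ε => ∫ z in x..y, a ε z) (𝓝[>] (0:ℝ))
        (𝓝 (α * (if x < 0 ∧ 0 < y then 1 else 0))))
    {F : ℝ → ℝ} (hFm : Measurable F) (hFC : ∀ z, ‖F z‖ ≤ C) :
    TendstoUniformlyOn (fun ε x => ∫ y in p..x, ∫ z in p..y, Vker γ (a ε) y z * F z)
      (fun x => ∫ y in p..x, ∫ z in p..y, Vlim γ α y z * F z) (𝓝[>] (0:ℝ)) (Icc p q) := by
  have hpos : ∀ᶠ ε in 𝓝[>] (0:ℝ), 0 < ε := self_mem_nhdsWithin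
  have hmeas : ∀ᶠ ε in 𝓝[>] (0:ℝ), Measurable (uncurry fun y z => Vker γ (a ε) y z * F z) :=
    hpos.mono fun ε hε => (measurable_Vker γ (haint ε hε)).mul (hFm.comp measurable_snd)
  have hbound : ∀ᶠ ε in 𝓝[>] (0:ℝ), ∀ y z,
      ‖Vker γ (a ε) y z * F z‖ ≤ exp (2 * M) * (|γ| + 1) * C :=
    hpos.mono fun ε hε y z => by
      rw [norm_mul]
      exact mul_le_mul (abs_Vker_le γ (haint ε hε) (hM ε hε) y z) (hFC z) (norm_nonneg _)
        (by positivity)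
  have hbound_lim : ∀ y z, ‖Vlim γ α y z * F z‖ ≤ (|exp (-2 * α) * γ| + 1) * C := fun y z => by
    rw [norm_mul]
    exact mul_le_mul (abs_Vlim_le γ α y z) (hFC z) (norm_nonneg _) (by positivity)
  have hpointwise : ∀ᵐ y, ∀ᵐ z, z < y → Tendsto (fun ε => Vker γ (a ε) y z * F z)
      (𝓝[>] (0:ℝ)) (𝓝 (Vlim γ α y z * F z)) := by
    filter_upwards [volume.ae_ne 0] with y hy
    filter_upwards [volume.ae_ne 0] with z hz hzy
    exact (tendsto_Vker hzy hz hy (hlim z y hzy hz hy)).mul_const _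
  exact tendstoUniformlyOn_iteratedIntegral hmeas (H := fun y z => Vlim γ α y z * F z)
    ((measurable_Vlim γ α).mul (hFm.comp measurable_snd)) hbound hbound_lim hpointwise

theorem stmt2_general (r lam γ α : ℝ)
    (a : ℝ → ℝ → ℝ)
    (haint : ∀ ε > (0:ℝ), Integrable (a ε))
    (haM : ∃ M : ℝ, ∀ ε > (0:ℝ), ∫ x, |a ε x| ≤ M)
    (hlim : ∀ x y : ℝ, x < y → x ≠ 0 → y ≠ 0 →
      Tendsto (fun ε => ∫ z in x..y, a ε z) (𝓝[>] (0:ℝ))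
        (𝓝 (α * (if x < 0 ∧ 0 < y then 1 else 0))))
    (f : ℝ → ℝ) (hf : ContinuousOn f (Icc (-r) r)) :
    TendstoUniformlyOn (fun ε x => Tmap r lam γ (a ε) f x)
      (fun x => 1 + 2 * lam * ∫ y in (-r)..x, ∫ z in (-r)..y, Vlim γ α y z * f z)
      (𝓝[>] (0:ℝ)) (Icc (-r) r) := by
  obtain ⟨M, hM⟩ := haM
  obtain ⟨F, hFm, ⟨C, hFC⟩, hFf⟩ := isCompact_Icc.exists_measurable_bounded_eqOn hf
  have haffine : UniformContinuous fun t : ℝ => 1 + 2 * lam * t :=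
    uniformContinuous_const.add (uniformContinuous_mul_left' _)
  have hconv := tendstoUniformlyOn_iteratedIntegral_Vker_mul (γ := γ) (p := -r) (q := r)
    haint hM hlim hFm hFC
  refine ((haffine.comp_tendstoUniformlyOn hconv).congr
    (Eventually.of_forall fun ε x hx => ?_)).congr_right fun x hx => ?_
  · simp only [comp_apply, Tmap, iteratedIntegral_mul_congr hFf hx]
  · simp only [comp_apply, iteratedIntegral_mul_congr hFf hx]

/-- `T_ε f → T f` uniformly on `[−r,r]` as `ε → 0+`. -/
theorem stmt2 (r lam γ α : ℝ) (hr : 0 < r) (hlam : 0 < lam) (hγ : 0 < γ)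
    (a : ℝ → ℝ → ℝ)
    (hacont : ∀ ε > (0:ℝ), Continuous (a ε))
    (haint : ∀ ε > (0:ℝ), Integrable (a ε))
    (haM : ∃ M : ℝ, ∀ ε > (0:ℝ), ∫ x, |a ε x| ≤ M)
    (hlim : ∀ x y : ℝ, x < y → x ≠ 0 → y ≠ 0 →
      Tendsto (fun ε => ∫ z in x..y, a ε z) (𝓝[>] (0:ℝ))
        (𝓝 (α * (if x < 0 ∧ 0 < y then 1 else 0))))
    (f : ℝ → ℝ) (hf : ContinuousOn f (Icc (-r) r)) :
    TendstoUniformlyOn (fun ε x => Tmap r lam γ (a ε) f x)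
      (fun x => 1 + 2 * lam * ∫ y in (-r)..x, ∫ z in (-r)..y, Vlim γ α y z * f z)
      (𝓝[>] (0:ℝ)) (Icc (-r) r) :=
  stmt2_general r lam γ α a haint haM hlim f hf
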